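/- arXiv:1308.5407 — 6 statements merged into one kernel-verified Lean document; each statement's English description precedes it below -/
import Mathlib

section
/- Let (X,d) be a metric space such that for every finite collection of points x_1,…,x_m ∈ X and real coefficients c_1,…,c_m one has Σ_{j,k} c_j c_k e^{-d(x_j,x_k)} ≥ 0. For a finitely supported signed measure μ = Σ_j c_j δ_{x_j} on X write ‖μ‖_W := (Σ_{j,k} c_j c_k e^{-d(x_j,x_k)})^{1/2} and Zμ(x) := Σ_j c_j e^{-d(x,x_j)}. Then for every such μ and all x, y ∈ X one has |Zμ(x)| ≤ ‖μ‖_W and |Zμ(x) − Zμ(y)| ≤ ‖μ‖_W · √(2·d(x,y)). -/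
/-!
The kernel `e^{-d}` defines a symmetric bilinear form `⟪μ, ν⟫ = ∫∫ e^{-d(a,b)} dμ(a) dν(b)` on
finitely supported signed measures, positive semidefinite by hypothesis, with `‖μ‖_W² = ⟪μ, μ⟫`.
Since `Zμ(x) = ⟪δ_x, μ⟫`, both bounds are Cauchy–Schwarz: `⟪δ_x, δ_x⟫ = 1`, and
`⟪δ_x - δ_y, δ_x - δ_y⟫ = 2 - 2e^{-d(x,y)} ≤ 2 d(x,y)`.
-/

open Finsupp

theorem LinearMap.BilinForm.IsPosSemidef.abs_apply_le_sqrt_mul_sqrt {M : Type*}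
    [AddCommGroup M] [Module ℝ M] {B : LinearMap.BilinForm ℝ M} (hB : B.IsPosSemidef) (x y : M) :
    |B x y| ≤ √(B x x) * √(B y y) := by
  rw [← Real.sqrt_mul (hB.nonneg x)]
  exact Real.abs_le_sqrt <| B.apply_sq_le_of_symm hB.nonneg (isSymm_iff.1 hB.isSymm) x y

namespace Finsupp

variable {X M : Type*} [AddCommMonoid M]

theorem exists_fin_sum_single (μ : X →₀ M) :
    ∃ (m : ℕ) (x : Fin m → X) (c : Fin m → M), μ = ∑ j, single (x j) (c j) := by
  refine ⟨_, fun j => μ.support.equivFin.symm j, fun j => μ (μ.support.equivFin.symm j), ?_⟩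
  rw [Equiv.sum_comp μ.support.equivFin.symm (fun a => single (a : X) (μ a)),
    Finset.sum_coe_sort μ.support (fun a => single a (μ a))]
  exact (sum_single μ).symm

end Finsupp

section

variable {X : Type*} (K : X → X → ℝ)

/-- Finitely supported signed measures on `X` are modelled as `X →₀ ℝ`; the form is
`(μ, ν) ↦ ∫∫ K dμ dν`. -/
noncomputable def kernelForm : LinearMap.BilinForm ℝ (X →₀ ℝ) :=
  lsum ℝ fun a => LinearMap.smulRight LinearMap.id (linearCombination ℝ (K a))

@[simp]
theorem kernelForm_single_single (a b : X) (s t : ℝ) :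
    kernelForm K (single a s) (single b t) = s * t * K a b := by
  simp only [kernelForm, coe_lsum, LinearMap.coe_smulRight, LinearMap.id_coe, id_eq, zero_smul,
    sum_single_index, LinearMap.smul_apply, linearCombination_single, smul_eq_mul]
  ring

theorem kernelForm_sum_single_sum_single {m n : ℕ} (x : Fin m → X) (c : Fin m → ℝ)
    (y : Fin n → X) (b : Fin n → ℝ) :
    kernelForm K (∑ j, single (x j) (c j)) (∑ k, single (y k) (b k)) =
      ∑ j, ∑ k, c j * b k * K (x j) (y k) := by
  simp only [map_sum, LinearMap.sum_apply, kernelForm_single_single]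
  exact Finset.sum_comm

theorem kernelForm_isPosSemidef (hsymm : ∀ a b, K a b = K b a)
    (hpos : ∀ (m : ℕ) (x : Fin m → X) (c : Fin m → ℝ), 0 ≤ ∑ j, ∑ k, c j * c k * K (x j) (x k)) :
    (kernelForm K).IsPosSemidef where
  eq μ ν := by
    induction μ using Finsupp.induction_linear with
    | zero => simp
    | add μ₁ μ₂ h₁ h₂ => simp_all
    | single a s =>
      induction ν using Finsupp.induction_linear with
      | zero => simp
      | add ν₁ ν₂ h₁ h₂ => simp_all
      | single b t => simp [hsymm a b, mul_comm s t]
  nonneg μ := by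
    obtain ⟨m, x, c, rfl⟩ := μ.exists_fin_sum_single
    rw [kernelForm_sum_single_sum_single]
    exact hpos m x c

end

/-- Let `(X,d)` be a metric space such that for every finite collection
of points and real coefficients, `∑_{j,k} c_j c_k e^{-d(x_j,x_k)} ≥ 0`.  For a finitely
supported signed measure `μ = ∑_j c_j δ_{x_j}` write
`‖μ‖_W = (∑_{j,k} c_j c_k e^{-d(x_j,x_k)})^{1/2}` and `Zμ(x) = ∑_j c_j e^{-d(x,x_j)}`.
Then `|Zμ(x)| ≤ ‖μ‖_W` and `|Zμ(x) − Zμ(y)| ≤ ‖μ‖_W · √(2 d(x,y))`. -/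
theorem stmt0 {X : Type*} [MetricSpace X]
    (hpos : ∀ (m : ℕ) (x : Fin m → X) (c : Fin m → ℝ),
      0 ≤ ∑ j, ∑ k, c j * c k * Real.exp (-dist (x j) (x k)))
    (m : ℕ) (x : Fin m → X) (c : Fin m → ℝ) (p q : X) :
    |∑ j, c j * Real.exp (-dist p (x j))|
        ≤ Real.sqrt (∑ j, ∑ k, c j * c k * Real.exp (-dist (x j) (x k))) ∧
    |(∑ j, c j * Real.exp (-dist p (x j))) - ∑ j, c j * Real.exp (-dist q (x j))|
        ≤ Real.sqrt (∑ j, ∑ k, c j * c k * Real.exp (-dist (x j) (x k)))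
          * Real.sqrt (2 * dist p q) := by
  set B := kernelForm fun a b : X => Real.exp (-dist a b)
  have hB : B.IsPosSemidef := kernelForm_isPosSemidef _ (fun a b => by rw [dist_comm]) hpos
  set μ := ∑ j, single (x j) (c j)
  have hμ : B μ μ = ∑ j, ∑ k, c j * c k * Real.exp (-dist (x j) (x k)) :=
    kernelForm_sum_single_sum_single _ x c x c
  have hZ (r : X) : B (single r 1) μ = ∑ j, c j * Real.exp (-dist r (x j)) := by
    simp [B, μ, map_sum]
  have hδ : B (single p 1 - single q 1) (single p 1 - single q 1) =
      2 - 2 * Real.exp (-dist p q) := by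
    simp only [B, map_sub, LinearMap.sub_apply, kernelForm_single_single, mul_one, dist_self,
      neg_zero, Real.exp_zero, one_mul, dist_comm q p]
    ring
  have hexp : 2 - 2 * Real.exp (-dist p q) ≤ 2 * dist p q := by
    linarith [Real.add_one_le_exp (-dist p q)]
  constructor
  · calc |∑ j, c j * Real.exp (-dist p (x j))| = |B (single p 1) μ| := by rw [hZ]
      _ ≤ √(B (single p 1) (single p 1)) * √(B μ μ) := hB.abs_apply_le_sqrt_mul_sqrt _ _
      _ = _ := by simp [B, hμ]
  · calc |(∑ j, c j * Real.exp (-dist p (x j))) - ∑ j, c j * Real.exp (-dist q (x j))|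
          = |B (single p 1 - single q 1) μ| := by rw [map_sub, LinearMap.sub_apply, hZ, hZ]
      _ ≤ √(B (single p 1 - single q 1) (single p 1 - single q 1)) * √(B μ μ) :=
          hB.abs_apply_le_sqrt_mul_sqrt _ _
      _ ≤ √(2 * dist p q) * √(B μ μ) := by
          rw [hδ]; gcongr
      _ = _ := by rw [hμ, mul_comm]
end

section
/- Let A ⊆ ℝⁿ be nonempty and compact and let t ≥ 1, and write tA := { t·a : a ∈ A }. Then |A|/t ≤ |tA| ≤ tⁿ·|A|, where |·| denotes magnitude. -/
/-!
Dilating an admissible function, `h ↦ h (s⁻¹ • ·)`, maps `𝒜(A)` to `𝒜(sA)` and turns `ĥ` into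
`ξ ↦ sⁿ ĥ(sξ)`, so its squared norm becomes `sⁿ ∫ w(ξ/s) |ĥ(ξ)|² dξ` with
`w(ξ) = (1 + ‖ξ‖²)^{(n+1)/2}`. For `t ≥ 1` we have `w(ξ/t) ≤ w(ξ)` and `w(tξ) ≤ t^{n+1} w(ξ)`;
taking `s = t` and `s = t⁻¹` gives `|tA| ≤ tⁿ|A|` and `|A| ≤ t|tA|`.
-/

open MeasureTheory Real Complex Filter
open scoped ENNReal RealInnerProductSpace

noncomputable section

/-- `ℝⁿ` with the Euclidean metric. -/
abbrev Eu (n : ℕ) := EuclideanSpace ℝ (Fin n)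

/-- Fourier transform, normalized as `ĥ(x) = (2π)^{-n/2} ∫ h(y) e^{-i⟨x,y⟩} dy`. -/
def FT (n : ℕ) (h : Eu n → ℂ) (x : Eu n) : ℂ :=
  (((2 * π) ^ (-(n : ℝ) / 2) : ℝ) : ℂ) *
    ∫ y : Eu n, Complex.exp (-(Complex.I * (⟪x, y⟫ : ℝ))) * h y

/-- Squared Sobolev norm `‖h‖²_{H^{(n+1)/2}}`, valued in `[0,∞]`. -/
def HnormSq (n : ℕ) (h : Eu n → ℂ) : ℝ≥0∞ :=
  ∫⁻ x : Eu n, ENNReal.ofReal ((1 + ‖x‖ ^ 2) ^ (((n : ℝ) + 1) / 2) * ‖FT n h x‖ ^ 2)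

/-- `ωₙ`, the volume of the Euclidean unit ball in `ℝⁿ`. -/
def omegaBall (n : ℕ) : ℝ := π ^ ((n : ℝ) / 2) / Real.Gamma ((n : ℝ) / 2 + 1)

/-- The admissible class `𝒜(A)`: continuous `h ∈ L²` with finite `H^{(n+1)/2}` norm
which are identically `1` on `A`. -/
def Admissible (n : ℕ) (A : Set (Eu n)) (h : Eu n → ℂ) : Prop :=
  Continuous h ∧ MemLp h 2 (volume : Measure (Eu n)) ∧ HnormSq n h < ⊤ ∧ ∀ a ∈ A, h a = 1

/-- The magnitude `|A| = (n!·ωₙ)⁻¹ inf {‖h‖²_{H^{(n+1)/2}} : h ∈ 𝒜(A)}`,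
as an extended nonnegative real. -/
def magnitudeE (n : ℕ) (A : Set (Eu n)) : ℝ≥0∞ :=
  (⨅ h ∈ {h | Admissible n A h}, HnormSq n h) / ENNReal.ofReal (n.factorial * omegaBall n)

/-- The magnitude `|A| = (n!·ωₙ)⁻¹ inf {‖h‖²_{H^{(n+1)/2}} : h ∈ 𝒜(A)}`, as a real number. -/
def magnitude (n : ℕ) (A : Set (Eu n)) : ℝ :=
  (⨅ h ∈ {h | Admissible n A h}, HnormSq n h).toReal / (n.factorial * omegaBall n)

section Dilation

variable {E : Type*} [NormedAddCommGroup E] [NormedSpace ℝ E] [MeasurableSpace E] [BorelSpace E]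
  [FiniteDimensional ℝ E] (μ : Measure E) [μ.IsAddHaarMeasure]

theorem MeasureTheory.Measure.lintegral_comp_smul (f : E → ℝ≥0∞) {r : ℝ} (hr : r ≠ 0) :
    ∫⁻ x, f (r • x) ∂μ = ENNReal.ofReal |(r ^ Module.finrank ℝ E)⁻¹| * ∫⁻ x, f x ∂μ := by
  rw [← smul_eq_mul, ← lintegral_smul_measure, ← Measure.map_addHaar_smul μ hr,
    ← MeasurableEquiv.coe_smul₀ hr, lintegral_map_equiv]
  rfl

variable {μ} in
theorem MeasureTheory.MemLp.comp_smul {F : Type*} [NormedAddCommGroup F] {f : E → F} {p : ℝ≥0∞}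
    (hf : MemLp f p μ) {r : ℝ} (hr : r ≠ 0) : MemLp (fun x => f (r • x)) p μ := by
  have hmap : MemLp f p (Measure.map (fun x : E => r • x) μ) := by
    rw [Measure.map_addHaar_smul μ hr]
    exact hf.smul_measure ENNReal.ofReal_ne_top
  exact hmap.comp_of_map (measurable_const_smul r).aemeasurable

end Dilation

def sobolevWeight (n : ℕ) (x : Eu n) : ℝ := (1 + ‖x‖ ^ 2) ^ (((n : ℝ) + 1) / 2)

def infHnormSq (n : ℕ) (A : Set (Eu n)) : ℝ≥0∞ := ⨅ h ∈ {h | Admissible n A h}, HnormSq n h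

theorem HnormSq_eq (n : ℕ) (h : Eu n → ℂ) :
    HnormSq n h = ∫⁻ x, ENNReal.ofReal (sobolevWeight n x * ‖FT n h x‖ ^ 2) := rfl

theorem magnitude_eq (n : ℕ) (A : Set (Eu n)) :
    magnitude n A = (infHnormSq n A).toReal / (n.factorial * omegaBall n) := rfl

theorem sobolevWeight_le_of_norm_le {n : ℕ} {x y : Eu n} (hxy : ‖x‖ ≤ ‖y‖) :
    sobolevWeight n x ≤ sobolevWeight n y := by
  unfold sobolevWeight
  gcongr

theorem sobolevWeight_smul_le (n : ℕ) {t : ℝ} (ht : 1 ≤ t) (x : Eu n) :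
    sobolevWeight n (t • x) ≤ t ^ (n + 1) * sobolevWeight n x := by
  have hbase : 1 + ‖t • x‖ ^ 2 ≤ t ^ 2 * (1 + ‖x‖ ^ 2) := by
    rw [norm_smul, Real.norm_of_nonneg (by linarith)]
    nlinarith
  have hpow : (t ^ 2) ^ (((n : ℝ) + 1) / 2) = t ^ (n + 1) := by
    rw [← Real.rpow_natCast t 2, ← Real.rpow_mul (by linarith)]
    exact_mod_cast congrArg (t ^ ·) (by push_cast; ring : (2 : ℝ) * ((n + 1) / 2) = (n + 1 : ℕ))
  unfold sobolevWeight
  calc (1 + ‖t • x‖ ^ 2) ^ (((n : ℝ) + 1) / 2)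
      ≤ (t ^ 2 * (1 + ‖x‖ ^ 2)) ^ (((n : ℝ) + 1) / 2) := by gcongr
    _ = t ^ (n + 1) * (1 + ‖x‖ ^ 2) ^ (((n : ℝ) + 1) / 2) := by
      rw [Real.mul_rpow (by positivity) (by positivity), hpow]

theorem FT_comp_inv_smul (n : ℕ) (h : Eu n → ℂ) {s : ℝ} (hs : 0 < s) (x : Eu n) :
    FT n (fun y => h (s⁻¹ • y)) x = ((s ^ n : ℝ) : ℂ) * FT n h (s • x) := by
  have hinner (y : Eu n) : ⟪s • x, s⁻¹ • y⟫ = ⟪x, y⟫ := by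
    rw [real_inner_smul_left, real_inner_smul_right, ← mul_assoc, mul_inv_cancel₀ hs.ne', one_mul]
  have hint := Measure.integral_comp_inv_smul_of_nonneg volume
    (fun y : Eu n => Complex.exp (-(Complex.I * (⟪s • x, y⟫ : ℝ))) * h y) hs.le
  simp only [hinner, finrank_euclideanSpace_fin, Complex.real_smul] at hint
  rw [FT, FT, hint]
  ring

theorem HnormSq_comp_inv_smul (n : ℕ) (h : Eu n → ℂ) {s : ℝ} (hs : 0 < s) :
    HnormSq n (fun y => h (s⁻¹ • y)) = ENNReal.ofReal (s ^ n) *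
      ∫⁻ x, ENNReal.ofReal (sobolevWeight n (s⁻¹ • x) * ‖FT n h x‖ ^ 2) := by
  have hpoint (x : Eu n) : sobolevWeight n x * ‖FT n (fun y => h (s⁻¹ • y)) x‖ ^ 2
      = s ^ (2 * n) * (sobolevWeight n (s⁻¹ • s • x) * ‖FT n h (s • x)‖ ^ 2) := by
    rw [FT_comp_inv_smul n h hs, inv_smul_smul₀ hs.ne', norm_mul, Complex.norm_real,
      Real.norm_of_nonneg (by positivity)]
    ring
  simp_rw [HnormSq_eq, hpoint, ENNReal.ofReal_mul (by positivity : (0 : ℝ) ≤ s ^ (2 * n))]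
  rw [lintegral_const_mul' _ _ ENNReal.ofReal_ne_top,
    Measure.lintegral_comp_smul volume
      (fun x => ENNReal.ofReal (sobolevWeight n (s⁻¹ • x) * ‖FT n h x‖ ^ 2)) hs.ne',
    finrank_euclideanSpace_fin, abs_of_pos (by positivity), ← mul_assoc,
    ← ENNReal.ofReal_mul (by positivity)]
  congr 2
  field_simp
  ring

theorem HnormSq_comp_inv_smul_le (n : ℕ) (h : Eu n → ℂ) {s M : ℝ} (hs : 0 < s) (hM : 0 ≤ M)
    (hw : ∀ x, sobolevWeight n (s⁻¹ • x) ≤ M * sobolevWeight n x) :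
    HnormSq n (fun y => h (s⁻¹ • y)) ≤ ENNReal.ofReal (s ^ n * M) * HnormSq n h := by
  rw [HnormSq_comp_inv_smul n h hs, ENNReal.ofReal_mul (by positivity), mul_assoc]
  gcongr
  rw [HnormSq_eq, ← lintegral_const_mul' _ _ ENNReal.ofReal_ne_top]
  refine lintegral_mono fun x => ?_
  rw [← ENNReal.ofReal_mul hM, ← mul_assoc]
  gcongr
  exact hw x

theorem sobolevWeight_inv_smul_le (n : ℕ) {s : ℝ} (hs : 0 < s) (x : Eu n) :
    sobolevWeight n (s⁻¹ • x) ≤ max 1 s⁻¹ ^ (n + 1) * sobolevWeight n x := by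
  refine (sobolevWeight_le_of_norm_le ?_).trans (sobolevWeight_smul_le n (le_max_left 1 s⁻¹) x)
  rw [norm_smul, norm_smul, Real.norm_of_nonneg (by positivity),
    Real.norm_of_nonneg (by positivity)]
  gcongr
  exact le_max_right _ _

theorem Admissible.comp_inv_smul {n : ℕ} {A : Set (Eu n)} {h : Eu n → ℂ} (hh : Admissible n A h)
    {s : ℝ} (hs : 0 < s) : Admissible n ((fun a => s • a) '' A) (fun y => h (s⁻¹ • y)) := by
  obtain ⟨hcont, hL2, hfin, hone⟩ := hh
  refine ⟨hcont.comp (continuous_const_smul _), hL2.comp_smul (inv_ne_zero hs.ne'), ?_, ?_⟩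
  · exact (HnormSq_comp_inv_smul_le n h hs (by positivity)
      (sobolevWeight_inv_smul_le n hs)).trans_lt (ENNReal.mul_lt_top ENNReal.ofReal_lt_top hfin)
  · rintro _ ⟨a, ha, rfl⟩
    simpa only [inv_smul_smul₀ hs.ne'] using hone a ha

theorem infHnormSq_image_smul_le (n : ℕ) (A : Set (Eu n)) {s M : ℝ} (hs : 0 < s) (hM : 0 < M)
    (hw : ∀ x, sobolevWeight n (s⁻¹ • x) ≤ M * sobolevWeight n x) :
    infHnormSq n ((fun a => s • a) '' A) ≤ ENNReal.ofReal (s ^ n * M) * infHnormSq n A := by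
  have hC : ENNReal.ofReal (s ^ n * M) ≠ 0 := (ENNReal.ofReal_pos.2 (by positivity)).ne'
  simp only [infHnormSq, ENNReal.mul_iInf_of_ne hC ENNReal.ofReal_ne_top]
  exact le_iInf₂ fun h hh => iInf₂_le_of_le _ (hh.comp_inv_smul hs)
    (HnormSq_comp_inv_smul_le n h hs hM.le hw)

theorem infHnormSq_image_smul_le_pow (n : ℕ) (A : Set (Eu n)) {t : ℝ} (ht : 1 ≤ t) :
    infHnormSq n ((fun a => t • a) '' A) ≤ ENNReal.ofReal (t ^ n) * infHnormSq n A := by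
  have ht0 : 0 < t := by linarith
  have hw (x : Eu n) : sobolevWeight n (t⁻¹ • x) ≤ 1 * sobolevWeight n x := by
    rw [one_mul]
    refine sobolevWeight_le_of_norm_le ?_
    rw [norm_smul, Real.norm_of_nonneg (by positivity)]
    exact mul_le_of_le_one_left (norm_nonneg x) (inv_le_one_of_one_le₀ ht)
  simpa using infHnormSq_image_smul_le n A ht0 one_pos hw

theorem infHnormSq_le_mul_image_smul (n : ℕ) (A : Set (Eu n)) {t : ℝ} (ht : 1 ≤ t) :
    infHnormSq n A ≤ ENNReal.ofReal t * infHnormSq n ((fun a => t • a) '' A) := by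
  have ht0 : 0 < t := by linarith
  have hA : (fun a => t⁻¹ • a) '' ((fun a => t • a) '' A) = A := by
    rw [Set.image_image]
    simp only [inv_smul_smul₀ ht0.ne', Set.image_id']
  have hcoef : t⁻¹ ^ n * t ^ (n + 1) = t := by
    rw [inv_pow, pow_succ]
    field_simp
  have hw (x : Eu n) : sobolevWeight n (t⁻¹⁻¹ • x) ≤ t ^ (n + 1) * sobolevWeight n x := by
    rw [inv_inv]
    exact sobolevWeight_smul_le n ht x
  have := infHnormSq_image_smul_le n ((fun a => t • a) '' A) (inv_pos.2 ht0) (by positivity) hw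
  rwa [hA, hcoef] at this

theorem ENNReal.toReal_le_mul_of_le_mul {a b : ℝ≥0∞} {c d : ℝ} (hc : 0 ≤ c)
    (hab : a ≤ ENNReal.ofReal c * b) (hba : b ≤ ENNReal.ofReal d * a) :
    a.toReal ≤ c * b.toReal := by
  by_cases hb : b = ⊤
  · have ha : a = ⊤ := by
      by_contra ha
      exact ne_top_of_le_ne_top (ENNReal.mul_ne_top ENNReal.ofReal_ne_top ha) hba hb
    simp [ha, hb]
  · have := ENNReal.toReal_mono (ENNReal.mul_ne_top ENNReal.ofReal_ne_top hb) hab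
    rwa [ENNReal.toReal_mul, ENNReal.toReal_ofReal hc] at this

theorem magnitude_le_mul_of_infHnormSq_le {n : ℕ} {A B : Set (Eu n)} {c d : ℝ} (hc : 0 ≤ c)
    (hBA : infHnormSq n B ≤ ENNReal.ofReal c * infHnormSq n A)
    (hAB : infHnormSq n A ≤ ENNReal.ofReal d * infHnormSq n B) :
    magnitude n B ≤ c * magnitude n A := by
  rw [magnitude_eq, magnitude_eq, ← mul_div_assoc]
  exact div_le_div_of_nonneg_right (ENNReal.toReal_le_mul_of_le_mul hc hBA hAB)
    (by unfold omegaBall; positivity)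

theorem stmt5_general (n : ℕ) (A : Set (Eu n)) (t : ℝ) (ht : 1 ≤ t) :
    magnitude n A / t ≤ magnitude n ((fun a => t • a) '' A) ∧
    magnitude n ((fun a => t • a) '' A) ≤ t ^ n * magnitude n A := by
  have hup := infHnormSq_image_smul_le_pow n A ht
  have hdown := infHnormSq_le_mul_image_smul n A ht
  refine ⟨?_, magnitude_le_mul_of_infHnormSq_le (by positivity) hup hdown⟩
  rw [div_le_iff₀' (by linarith)]
  exact magnitude_le_mul_of_infHnormSq_le (by linarith) hdown hup

/-- For nonempty compact `A ⊆ ℝⁿ` and `t ≥ 1`,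
`|A|/t ≤ |tA| ≤ tⁿ·|A|`. -/
theorem stmt5 (n : ℕ) (hn : 1 ≤ n) (A : Set (Eu n)) (hA : A.Nonempty) (hAc : IsCompact A)
    (t : ℝ) (ht : 1 ≤ t) :
    magnitude n A / t ≤ magnitude n ((fun a => t • a) '' A) ∧
    magnitude n ((fun a => t • a) '' A) ≤ t ^ n * magnitude n A :=
  stmt5_general n A t ht
end
end

section
/- Let (A,d) be a nonempty compact metric space. Then limsup_{t→∞} log|tA|_+ / log t equals the upper Minkowski dimension of A, and liminf_{t→∞} log|tA|_+ / log t equals the lower Minkowski dimension of A (equalities in [0,∞]). -/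
open MeasureTheory Filter
open scoped ENNReal Topology

noncomputable section

/-- The maximum diversity `|tA|₊` of a compact metric space `A`: the supremum over Borel
probability measures `μ` on `A` of `(∫∫ e^{-t d(a,b)} dμ dμ)⁻¹`. -/
def maxDiv (A : Type*) [MetricSpace A] [MeasurableSpace A] (t : ℝ) : ℝ≥0∞ :=
  ⨆ μ : ProbabilityMeasure A,
    (∫⁻ a, ∫⁻ b, ENNReal.ofReal (Real.exp (-t * dist a b))
      ∂(μ : Measure A) ∂(μ : Measure A))⁻¹

/-- The covering number `N(A,ε)`: the smallest `m` such that `A` is covered by `m` closed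
balls of radius `ε` centered at points of `A`. -/
def coveringNumber (A : Type*) [MetricSpace A] (ε : ℝ) : ℕ :=
  sInf {m : ℕ | ∃ s : Finset A, s.card = m ∧ ∀ a : A, ∃ c ∈ s, dist a c ≤ ε}

/-- The packing number `M(A,ε)`: the largest `m` such that there are `m` points of `A`
whose closed balls of radius `ε` are pairwise disjoint. -/
def packingNumber (A : Type*) [MetricSpace A] (ε : ℝ) : ℕ :=
  sSup {m : ℕ | ∃ x : Fin m → A, Pairwise fun j k =>
    Disjoint (Metric.closedBall (x j) ε) (Metric.closedBall (x k) ε)}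

/-- The upper Minkowski dimension `limsup_{ε→0⁺} log N(A,ε)/log(1/ε)`, in `[0,∞]`. -/
def upperMinkowski (A : Type*) [MetricSpace A] : ℝ≥0∞ :=
  limsup (fun ε : ℝ =>
    ENNReal.ofReal (Real.log (coveringNumber A ε) / Real.log (1 / ε))) (𝓝[>] 0)

/-- The lower Minkowski dimension `liminf_{ε→0⁺} log N(A,ε)/log(1/ε)`, in `[0,∞]`. -/
def lowerMinkowski (A : Type*) [MetricSpace A] : ℝ≥0∞ :=
  liminf (fun ε : ℝ =>
    ENNReal.ofReal (Real.log (coveringNumber A ε) / Real.log (1 / ε))) (𝓝[>] 0)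

/-! Both sides are governed by covering numbers at scale about `1 / t`. Partitioning `A` into
`N(A, ε)` pieces of diameter at most `2ε` and applying Cauchy–Schwarz to their masses gives
`|tA|₊ ≤ N(A, ε) e^{2tε}`; the uniform measure on a maximal `δ`-separated set, which is a `δ`-net,
gives `min (N(A, δ), e^{tδ}) ≤ 2 |tA|₊`. Take `ε = 1 / t` in the first bound, and `tδ = log² (1/δ)`
in the second: then `log t = log (1/δ) + O(log log (1/δ))`, while `e^{tδ}` outgrows every power of
`1/δ`, so `log |tA|₊ / log t` and `log N(A, δ) / log (1/δ)` differ by errors that vanish in the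
limit. -/

open Set Function
open scoped NNReal

section Partition

variable {X : Type*} [MeasurableSpace X]

theorem measurableSet_disjointed {ι : Type*} [Preorder ι] [LocallyFiniteOrderBot ι]
    {f : ι → Set X} (hf : ∀ i, MeasurableSet (f i)) (i : ι) :
    MeasurableSet (disjointed f i) := by
  rw [disjointed_apply, Finset.sup_set_eq_biUnion]
  exact (hf i).diff (Finset.measurableSet_biUnion _ fun j _ => hf j)

theorem inv_sum_measure_sq_le_card {ι : Type*} [Fintype ι] (μ : Measure X)
    [IsProbabilityMeasure μ] {D : ι → Set X} (hD : ∀ i, MeasurableSet (D i))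
    (hdisj : Pairwise (Disjoint on D)) (hcover : ⋃ i, D i = univ) :
    (∑ i, μ (D i) ^ 2)⁻¹ ≤ Fintype.card ι := by
  have hsum : ∑ i, μ (D i) = 1 := by
    simpa [hcover, tsum_fintype] using (measure_iUnion hdisj hD (μ := μ)).symm
  have hcoe : ∀ i, ((μ (D i)).toNNReal : ℝ≥0∞) = μ (D i) := fun i =>
    ENNReal.coe_toNNReal (measure_ne_top μ _)
  have hCS := ENNReal.coe_le_coe.2 <|
    sq_sum_le_card_mul_sum_sq (s := Finset.univ) (f := fun i => (μ (D i)).toNNReal)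
  push_cast [hcoe, hsum, one_pow, Finset.card_univ] at hCS
  rw [ENNReal.inv_le_iff_inv_le]
  exact (ENNReal.inv_le_iff_le_mul (fun _ h => by simp [h] at hCS)
    fun h => absurd h (ENNReal.natCast_ne_top _)).2 hCS

theorem mul_sum_measure_sq_le_lintegral {ι : Type*} [Fintype ι] (μ : Measure X)
    {D : ι → Set X} (hD : ∀ i, MeasurableSet (D i)) (hdisj : Pairwise (Disjoint on D))
    {K : X → X → ℝ≥0∞} {c : ℝ≥0∞} (hK : ∀ i, ∀ x ∈ D i, ∀ y ∈ D i, c ≤ K x y) :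
    c * ∑ i, μ (D i) ^ 2 ≤ ∫⁻ x, ∫⁻ y, K x y ∂μ ∂μ := by
  have hrow : ∀ i, ∀ x ∈ D i, c * μ (D i) ≤ ∫⁻ y, K x y ∂μ := fun i x hx =>
    calc c * μ (D i) = ∫⁻ _ in D i, c ∂μ := (setLIntegral_const _ _).symm
      _ ≤ ∫⁻ y in D i, K x y ∂μ := setLIntegral_mono' (hD i) (hK i x hx)
      _ ≤ ∫⁻ y, K x y ∂μ := setLIntegral_le_lintegral _ _
  calc c * ∑ i, μ (D i) ^ 2 = ∑ i, ∫⁻ _ in D i, c * μ (D i) ∂μ := by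
        simp only [Finset.mul_sum, setLIntegral_const, sq, mul_assoc]
    _ ≤ ∑ i, ∫⁻ x in D i, ∫⁻ y, K x y ∂μ ∂μ :=
        Finset.sum_le_sum fun i _ => setLIntegral_mono' (hD i) (hrow i)
    _ = ∫⁻ x in ⋃ i, D i, ∫⁻ y, K x y ∂μ ∂μ := by
        rw [lintegral_iUnion hD hdisj, tsum_fintype]
    _ ≤ ∫⁻ x, ∫⁻ y, K x y ∂μ ∂μ := setLIntegral_le_lintegral _ _

end Partition

section Asymptotics

variable {α : Type*} {l : Filter α} {f g : α → ℝ}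

theorem limsup_ofReal_le_limsup_ofReal
    (h : ∀ β ≥ (0 : ℝ), ∀ η > (0 : ℝ), ∀ᶠ x in l, β < f x → β - η ≤ g x) :
    limsup (fun x => ENNReal.ofReal (f x)) l ≤ limsup (fun x => ENNReal.ofReal (g x)) l := by
  refine ENNReal.le_of_forall_nnreal_lt fun β hβ =>
    ENNReal.le_of_forall_pos_le_add fun η hη _ => ?_
  have hfreq : ∃ᶠ x in l, (β : ℝ) < f x :=
    (frequently_lt_of_lt_limsup (by isBoundedDefault) hβ).mono fun x hx =>
      ENNReal.coe_lt_ofReal.1 hx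
  rw [← tsub_le_iff_right, ← ENNReal.ofReal_coe_nnreal, ← ENNReal.ofReal_coe_nnreal (p := η),
    ← ENNReal.ofReal_sub _ η.coe_nonneg]
  exact le_limsup_of_frequently_le ((hfreq.and_eventually (h β β.2 η hη)).mono
    fun x hx => ENNReal.ofReal_le_ofReal (hx.2 hx.1)) (by isBoundedDefault)

theorem liminf_ofReal_le_liminf_ofReal
    (h : ∀ β ≥ (0 : ℝ), ∀ η > (0 : ℝ), ∀ᶠ x in l, β < f x → β - η ≤ g x) :
    liminf (fun x => ENNReal.ofReal (f x)) l ≤ liminf (fun x => ENNReal.ofReal (g x)) l := by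
  refine ENNReal.le_of_forall_nnreal_lt fun β hβ =>
    ENNReal.le_of_forall_pos_le_add fun η hη _ => ?_
  have hev : ∀ᶠ x in l, (β : ℝ) < f x :=
    (eventually_lt_of_lt_liminf hβ).mono fun x hx => ENNReal.coe_lt_ofReal.1 hx
  rw [← tsub_le_iff_right, ← ENNReal.ofReal_coe_nnreal, ← ENNReal.ofReal_coe_nnreal (p := η),
    ← ENNReal.ofReal_sub _ η.coe_nonneg]
  exact le_liminf_of_le (by isBoundedDefault) ((hev.and (h β β.2 η hη)).mono
    fun x hx => ENNReal.ofReal_le_ofReal (hx.2 hx.1))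

theorem eventually_add_mul_log_le (a b : ℝ) {η : ℝ} (hη : 0 < η) :
    ∀ᶠ x in atTop, a + b * Real.log x ≤ η * x := by
  have h : (fun x => a + b * Real.log x) =o[atTop] id :=
    (Asymptotics.isLittleO_const_id_atTop a).add
      (Real.isLittleO_log_id_atTop.const_mul_left b)
  filter_upwards [h.bound hη, eventually_ge_atTop 0] with x hx hx0
  simpa [abs_of_nonneg hx0] using (le_abs_self _).trans hx

end Asymptotics

section Covering

theorem coveringNumber_le_card {A : Type*} [MetricSpace A] {ε : ℝ} {s : Finset A}
    (hs : ∀ a : A, ∃ c ∈ s, dist a c ≤ ε) : coveringNumber A ε ≤ s.card :=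
  Nat.sInf_le ⟨s, rfl, hs⟩

variable {A : Type*} [MetricSpace A] [CompactSpace A] {δ ε : ℝ}

theorem exists_separated_cover (hδ : 0 < δ) :
    ∃ S : Finset A, (S : Set A).Pairwise (fun x y => δ < dist x y) ∧
      ∀ a : A, ∃ c ∈ S, dist a c ≤ δ := by
  lift δ to ℝ≥0 using hδ.le
  obtain ⟨C, -, hCfin, hC⟩ := Metric.exists_finite_isCover_of_isCompact (ε := δ / 2)
    (half_pos (NNReal.coe_pos.1 hδ)).ne' (isCompact_univ (X := A))
  have hpack : Metric.packingNumber δ (univ : Set A) ≠ ⊤ := by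
    refine ne_top_of_le_ne_top hCfin.encard_lt_top.ne ?_
    calc Metric.packingNumber δ univ = Metric.packingNumber (2 * (δ / 2)) univ := by
          rw [mul_div_cancel₀ _ two_ne_zero]
      _ ≤ Metric.externalCoveringNumber (δ / 2) univ :=
          Metric.packingNumber_two_mul_le_externalCoveringNumber _ _
      _ ≤ C.encard := hC.externalCoveringNumber_le_encard
  have hfin : (Metric.maximalSeparatedSet δ (univ : Set A)).Finite := by
    rw [← Set.encard_ne_top_iff, Metric.encard_maximalSeparatedSet hpack]; exact hpack
  refine ⟨hfin.toFinset, ?_, fun a => ?_⟩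
  · intro x hx y hy hxy
    have : (δ : ℝ≥0∞) < edist x y := Metric.isSeparated_maximalSeparatedSet (ε := δ) (A := univ)
      (by simpa using hx) (by simpa using hy) hxy
    rw [edist_dist, ← ENNReal.ofReal_coe_nnreal] at this
    exact (ENNReal.ofReal_lt_ofReal_iff_of_nonneg δ.2).1 this
  · obtain ⟨c, hc, hac⟩ := Metric.isCover_maximalSeparatedSet hpack (mem_univ a)
    exact ⟨c, by simpa using hc, by simpa [dist_le_coe, edist_le_coe] using hac⟩

theorem exists_fin_cover_coveringNumber (hε : 0 < ε) :
    ∃ c : Fin (coveringNumber A ε) → A, ∀ a : A, ∃ i, dist a (c i) ≤ ε := by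
  obtain ⟨S, -, hS⟩ := exists_separated_cover (A := A) hε
  obtain ⟨s, hcard, hs⟩ := Nat.sInf_mem
    (s := {m | ∃ s : Finset A, s.card = m ∧ ∀ a : A, ∃ c ∈ s, dist a c ≤ ε}) ⟨S.card, S, rfl, hS⟩
  rw [show coveringNumber A ε = s.card from hcard.symm]
  refine ⟨fun i => s.equivFin.symm i, fun a => ?_⟩
  obtain ⟨c, hc, hac⟩ := hs a
  exact ⟨s.equivFin ⟨c, hc⟩, by simpa using hac⟩

theorem exists_partition_coveringNumber [MeasurableSpace A] [OpensMeasurableSpace A]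
    (hε : 0 < ε) :
    ∃ D : Fin (coveringNumber A ε) → Set A, (∀ i, MeasurableSet (D i)) ∧
      Pairwise (Disjoint on D) ∧ ⋃ i, D i = univ ∧
      ∀ i, ∀ x ∈ D i, ∀ y ∈ D i, dist x y ≤ 2 * ε := by
  obtain ⟨c, hc⟩ := exists_fin_cover_coveringNumber (A := A) hε
  refine ⟨disjointed fun i => Metric.closedBall (c i) ε,
    measurableSet_disjointed fun _ => measurableSet_closedBall, disjoint_disjointed _, ?_,
    fun i x hx y hy => ?_⟩
  · rw [iUnion_disjointed]
    exact eq_univ_of_forall fun a => mem_iUnion.2 (hc a)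
  · have hx' := Metric.mem_closedBall.1 (disjointed_subset _ i hx)
    have hy' := Metric.mem_closedBall.1 (disjointed_subset _ i hy)
    linarith [dist_triangle_right x y (c i)]

theorem one_le_coveringNumber [Nonempty A] (hε : 0 < ε) : 1 ≤ coveringNumber A ε :=
  let ⟨_, hc⟩ := exists_fin_cover_coveringNumber (A := A) hε
  let ⟨i, _⟩ := hc (Classical.arbitrary A)
  i.pos

end Covering

theorem ENNReal.min_le_two_mul_inv_add_inv (a b : ℝ≥0∞) : min a b ≤ 2 * (a⁻¹ + b⁻¹)⁻¹ := by
  wlog hab : a ≤ b generalizing a b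
  · rw [min_comm, add_comm]; exact this b a (le_of_not_ge hab)
  calc min a b = 2 * (2 * a⁻¹)⁻¹ := by
        rw [min_eq_left hab, ENNReal.mul_inv (Or.inl two_ne_zero) (Or.inl ENNReal.ofNat_ne_top),
          inv_inv, ← mul_assoc, ENNReal.mul_inv_cancel two_ne_zero ENNReal.ofNat_ne_top, one_mul]
    _ ≤ 2 * (a⁻¹ + b⁻¹)⁻¹ := by
        gcongr
        rw [two_mul]
        gcongr

theorem sum_ofReal_exp_neg_dist_le {A : Type*} [MetricSpace A] {t δ : ℝ} (ht : 0 ≤ t)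
    {S : Finset A}
    (hS : (S : Set A).Pairwise fun x y => δ ≤ dist x y) {x : A} (hx : x ∈ S) :
    ∑ y ∈ S, ENNReal.ofReal (Real.exp (-t * dist x y)) ≤
      1 + S.card * ENNReal.ofReal (Real.exp (-(t * δ))) := by
  classical
  rw [← Finset.add_sum_erase S _ hx, dist_self, mul_zero, Real.exp_zero, ENNReal.ofReal_one]
  gcongr 1 + ?_
  calc ∑ y ∈ S.erase x, ENNReal.ofReal (Real.exp (-t * dist x y))
      ≤ ∑ _y ∈ S.erase x, ENNReal.ofReal (Real.exp (-(t * δ))) := by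
        gcongr with y hy
        nlinarith [hS hx (Finset.mem_of_mem_erase hy) (Finset.ne_of_mem_erase hy).symm]
    _ ≤ S.card * ENNReal.ofReal (Real.exp (-(t * δ))) := by
        rw [Finset.sum_const, nsmul_eq_mul]
        gcongr
        exact Finset.erase_subset x S

section Diversity

variable {A : Type*} [MetricSpace A] [MeasurableSpace A] {t δ ε : ℝ}

theorem inv_lintegral_le_maxDiv (μ : Measure A) [IsProbabilityMeasure μ] (t : ℝ) :
    (∫⁻ a, ∫⁻ b, ENNReal.ofReal (Real.exp (-t * dist a b)) ∂μ ∂μ)⁻¹ ≤ maxDiv A t :=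
  le_iSup (fun ν : ProbabilityMeasure A =>
    (∫⁻ a, ∫⁻ b, ENNReal.ofReal (Real.exp (-t * dist a b)) ∂(ν : Measure A) ∂(ν : Measure A))⁻¹)
    ⟨μ, inferInstance⟩

theorem one_le_maxDiv [MeasurableSingletonClass A] [Nonempty A] (t : ℝ) : 1 ≤ maxDiv A t := by
  simpa using inv_lintegral_le_maxDiv (Measure.dirac (Classical.arbitrary A)) t

theorem maxDiv_le_coveringNumber_mul_exp [OpensMeasurableSpace A] [CompactSpace A]
    (ht : 0 ≤ t) (hε : 0 < ε) :
    maxDiv A t ≤ coveringNumber A ε * ENNReal.ofReal (Real.exp (2 * t * ε)) := by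
  obtain ⟨D, hD, hdisj, hcover, hdiam⟩ := exists_partition_coveringNumber (A := A) hε
  set e := ENNReal.ofReal (Real.exp (-(2 * t * ε)))
  have hK : ∀ i, ∀ x ∈ D i, ∀ y ∈ D i, e ≤ ENNReal.ofReal (Real.exp (-t * dist x y)) :=
    fun i x hx y hy => ENNReal.ofReal_le_ofReal <| Real.exp_le_exp.2 <| by
      nlinarith [hdiam i x hx y hy]
  have he : e ≠ 0 := (ENNReal.ofReal_pos.2 (Real.exp_pos _)).ne'
  refine iSup_le fun μ => ?_
  set S := ∑ i, (μ : Measure A) (D i) ^ 2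
  calc (∫⁻ a, ∫⁻ b, ENNReal.ofReal (Real.exp (-t * dist a b)) ∂(μ : Measure A) ∂(μ : Measure A))⁻¹
      ≤ (e * S)⁻¹ := ENNReal.inv_le_inv.2 (mul_sum_measure_sq_le_lintegral _ hD hdisj hK)
    _ = S⁻¹ * e⁻¹ := by rw [ENNReal.mul_inv (Or.inl he) (Or.inl ENNReal.ofReal_ne_top), mul_comm]
    _ ≤ coveringNumber A ε * ENNReal.ofReal (Real.exp (2 * t * ε)) := by
        rw [← ENNReal.ofReal_inv_of_pos (Real.exp_pos _), ← Real.exp_neg, neg_neg]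
        gcongr
        simpa using inv_sum_measure_sq_le_card (μ : Measure A) hD hdisj hcover

theorem inv_card_add_exp_le_maxDiv [MeasurableSingletonClass A] (ht : 0 ≤ t) {S : Finset A}
    (hS : (S : Set A).Pairwise fun x y => δ ≤ dist x y) :
    ((S.card : ℝ≥0∞)⁻¹ + ENNReal.ofReal (Real.exp (-(t * δ))))⁻¹ ≤ maxDiv A t := by
  classical
  rcases S.eq_empty_or_nonempty with rfl | hne
  · simp
  set M : ℝ≥0∞ := (S.card : ℝ≥0∞)
  have hM0 : M ≠ 0 := by simpa [M] using hne.ne_empty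
  have hMtop : M ≠ ⊤ := ENNReal.natCast_ne_top _
  set e := ENNReal.ofReal (Real.exp (-(t * δ)))
  let μ : Measure A := M⁻¹ • ∑ x ∈ S, Measure.dirac x
  have : IsProbabilityMeasure μ := ⟨by simp [μ, M, ENNReal.inv_mul_cancel hM0 hMtop]⟩
  have hμ : ∫⁻ a, ∫⁻ b, ENNReal.ofReal (Real.exp (-t * dist a b)) ∂μ ∂μ ≤ M⁻¹ + e :=
    calc ∫⁻ a, ∫⁻ b, ENNReal.ofReal (Real.exp (-t * dist a b)) ∂μ ∂μ
        = M⁻¹ * ∑ x ∈ S, M⁻¹ * ∑ y ∈ S, ENNReal.ofReal (Real.exp (-t * dist x y)) := by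
          simp [μ, lintegral_smul_measure]
      _ ≤ M⁻¹ * ∑ _x ∈ S, M⁻¹ * (1 + M * e) := by
          gcongr with x hx
          exact sum_ofReal_exp_neg_dist_le ht hS hx
      _ = M⁻¹ + e := by
          rw [Finset.sum_const, nsmul_eq_mul, ← mul_assoc, ENNReal.inv_mul_cancel hM0 hMtop,
            one_mul, mul_add, mul_one, ← mul_assoc, ENNReal.inv_mul_cancel hM0 hMtop, one_mul]
  exact (ENNReal.inv_le_inv.2 hμ).trans (inv_lintegral_le_maxDiv μ t)

theorem min_coveringNumber_exp_le_two_mul_maxDiv [CompactSpace A] [MeasurableSingletonClass A]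
    (ht : 0 ≤ t) (hδ : 0 < δ) :
    min (coveringNumber A δ : ℝ≥0∞) (ENNReal.ofReal (Real.exp (t * δ))) ≤ 2 * maxDiv A t := by
  obtain ⟨S, hsep, hcover⟩ := exists_separated_cover (A := A) hδ
  calc min (coveringNumber A δ : ℝ≥0∞) (ENNReal.ofReal (Real.exp (t * δ)))
      ≤ min (S.card : ℝ≥0∞) (ENNReal.ofReal (Real.exp (t * δ))) := by
        gcongr
        exact coveringNumber_le_card hcover
    _ ≤ 2 * ((S.card : ℝ≥0∞)⁻¹ + (ENNReal.ofReal (Real.exp (t * δ)))⁻¹)⁻¹ :=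
        ENNReal.min_le_two_mul_inv_add_inv _ _
    _ ≤ 2 * maxDiv A t := by
        rw [← ENNReal.ofReal_inv_of_pos (Real.exp_pos _), ← Real.exp_neg]
        gcongr
        exact inv_card_add_exp_le_maxDiv ht (hsep.mono' fun _ _ h => h.le)

theorem maxDiv_ne_top [OpensMeasurableSpace A] [CompactSpace A] (ht : 0 ≤ t) :
    maxDiv A t ≠ ⊤ :=
  ne_top_of_le_ne_top (by finiteness) (maxDiv_le_coveringNumber_mul_exp ht one_pos)

end Diversity

section LogEstimates

variable {A : Type*} [MetricSpace A] [MeasurableSpace A] [BorelSpace A] [CompactSpace A]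
  [Nonempty A] {t δ ε : ℝ}

theorem one_le_toReal_maxDiv (ht : 0 ≤ t) : 1 ≤ (maxDiv A t).toReal :=
  ENNReal.toReal_one ▸ ENNReal.toReal_mono (maxDiv_ne_top ht) (one_le_maxDiv t)

theorem log_maxDiv_le (ht : 0 ≤ t) (hε : 0 < ε) :
    Real.log (maxDiv A t).toReal ≤ Real.log (coveringNumber A ε) + 2 * t * ε := by
  have h := maxDiv_le_coveringNumber_mul_exp (A := A) ht hε
  have hreal : (maxDiv A t).toReal ≤ coveringNumber A ε * Real.exp (2 * t * ε) := by
    simpa [ENNReal.toReal_mul, (Real.exp_pos _).le] using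
      ENNReal.toReal_mono (by finiteness) h
  have hN : (0 : ℝ) < coveringNumber A ε := by exact_mod_cast one_le_coveringNumber (A := A) hε
  calc Real.log (maxDiv A t).toReal ≤ Real.log (coveringNumber A ε * Real.exp (2 * t * ε)) :=
        Real.log_le_log (zero_lt_one.trans_le (one_le_toReal_maxDiv ht)) hreal
    _ = Real.log (coveringNumber A ε) + 2 * t * ε := by
        rw [Real.log_mul hN.ne' (Real.exp_pos _).ne', Real.log_exp]

theorem min_log_coveringNumber_sub_log_two_le (ht : 0 ≤ t) (hδ : 0 < δ) :
    min (Real.log (coveringNumber A δ)) (t * δ) - Real.log 2 ≤ Real.log (maxDiv A t).toReal := by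
  have h := min_coveringNumber_exp_le_two_mul_maxDiv (A := A) ht hδ
  have hreal : min (coveringNumber A δ : ℝ) (Real.exp (t * δ)) ≤ 2 * (maxDiv A t).toReal := by
    have := ENNReal.toReal_mono (ENNReal.mul_ne_top ENNReal.ofNat_ne_top (maxDiv_ne_top ht)) h
    rwa [ENNReal.toReal_min (by finiteness) ENNReal.ofReal_ne_top, ENNReal.toReal_mul,
      ENNReal.toReal_natCast, ENNReal.toReal_ofReal (Real.exp_pos _).le, ENNReal.toReal_ofNat]
      at this
  have hN : (0 : ℝ) < coveringNumber A δ := by exact_mod_cast one_le_coveringNumber (A := A) hδ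
  have hD : 0 < (maxDiv A t).toReal := zero_lt_one.trans_le (one_le_toReal_maxDiv ht)
  rw [sub_le_iff_le_add, add_comm, ← Real.log_mul two_ne_zero hD.ne',
    Real.le_log_iff_exp_le (by positivity)]
  calc Real.exp (min (Real.log (coveringNumber A δ)) (t * δ))
      = min (coveringNumber A δ : ℝ) (Real.exp (t * δ)) := by
        rw [Real.exp_monotone.map_min, Real.exp_log hN]
    _ ≤ 2 * (maxDiv A t).toReal := hreal

end LogEstimates

def maxDivLogRatio (A : Type*) [MetricSpace A] [MeasurableSpace A] (t : ℝ) : ℝ :=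
  Real.log (maxDiv A t).toReal / Real.log t

def coveringLogRatio (A : Type*) [MetricSpace A] (ε : ℝ) : ℝ :=
  Real.log (coveringNumber A ε) / Real.log (1 / ε)

section Dimension

variable {A : Type*} [MetricSpace A] [MeasurableSpace A] [BorelSpace A] [CompactSpace A]
  [Nonempty A]

theorem maxDivLogRatio_le_coveringLogRatio_inv_add {t : ℝ} (ht : 1 < t) :
    maxDivLogRatio A t ≤ coveringLogRatio A t⁻¹ + 2 / Real.log t := by
  have h := log_maxDiv_le (A := A) (zero_le_one.trans ht.le) (inv_pos.2 (zero_lt_one.trans ht))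
  rw [mul_assoc, mul_inv_cancel₀ (zero_lt_one.trans ht).ne', mul_one] at h
  rw [maxDivLogRatio, coveringLogRatio, one_div, inv_inv, ← add_div]
  exact div_le_div_of_nonneg_right h (Real.log_pos ht).le

theorem sub_le_maxDivLogRatio {t ε β η : ℝ} (ht : 1 < t) (hε : 0 < ε)
    (hL : 0 < Real.log (1 / ε)) (hβ : β < coveringLogRatio A ε)
    (htε : β * Real.log (1 / ε) ≤ t * ε)
    (hη : (β - η) * Real.log t + Real.log 2 ≤ β * Real.log (1 / ε)) :
    β - η ≤ maxDivLogRatio A t := by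
  have hN : β * Real.log (1 / ε) < Real.log (coveringNumber A ε) := (lt_div_iff₀ hL).1 hβ
  rw [maxDivLogRatio, le_div_iff₀ (Real.log_pos ht)]
  calc (β - η) * Real.log t ≤ β * Real.log (1 / ε) - Real.log 2 := by linarith
    _ ≤ min (Real.log (coveringNumber A ε)) (t * ε) - Real.log 2 := by
        gcongr
        exact le_min hN.le htε
    _ ≤ Real.log (maxDiv A t).toReal :=
        min_log_coveringNumber_sub_log_two_le (zero_le_one.trans ht.le) hε

theorem eventually_sub_le_coveringLogRatio_inv (β η : ℝ) (hη : 0 < η) :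
    ∀ᶠ t in atTop, β < maxDivLogRatio A t → β - η ≤ coveringLogRatio A t⁻¹ := by
  have hsmall : ∀ᶠ t in atTop, 2 / Real.log t ≤ η :=
    (tendsto_const_nhds.div_atTop Real.tendsto_log_atTop).eventually (eventually_le_nhds hη)
  filter_upwards [eventually_gt_atTop 1, hsmall] with t ht hsmall hβ
  linarith [maxDivLogRatio_le_coveringLogRatio_inv_add (A := A) ht]

theorem eventually_sub_le_maxDivLogRatio_nhdsGT (β η : ℝ) (hη : 0 < η) :
    ∀ᶠ ε in 𝓝[>] 0, β < coveringLogRatio A ε →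
      β - η ≤ maxDivLogRatio A (1 / ε * Real.log (1 / ε) ^ 2) := by
  have hL : Tendsto (fun ε : ℝ => Real.log (1 / ε)) (𝓝[>] 0) atTop := by
    simpa [Function.comp_def] using Real.tendsto_log_atTop.comp (tendsto_inv_nhdsGT_zero (𝕜 := ℝ))
  filter_upwards [self_mem_nhdsWithin, hL.eventually_ge_atTop (max 1 β),
    hL.eventually (eventually_add_mul_log_le (Real.log 2) (2 * β) hη)]
    with ε (hε : 0 < ε) hLβ hlog hG
  set L := Real.log (1 / ε)
  have hL1 : 1 ≤ L := le_of_max_le_left hLβ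
  have hinv : 1 < 1 / ε := (Real.log_pos_iff (by positivity)).1 (by linarith)
  have hlogL : 0 ≤ Real.log L := Real.log_nonneg hL1
  refine sub_le_maxDivLogRatio ?_ hε (by linarith) hG ?_ ?_
  · exact one_lt_mul_of_lt_of_le hinv (one_le_pow₀ hL1)
  · have : 1 / ε * L ^ 2 * ε = L ^ 2 := by field_simp
    rw [this]; nlinarith [le_of_max_le_right hLβ]
  · rw [Real.log_mul (by positivity) (by positivity), Real.log_pow]
    push_cast
    nlinarith

theorem eventually_sub_le_maxDivLogRatio_atTop (β η : ℝ) (hη : 0 < η) :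
    ∀ᶠ t in atTop, β < coveringLogRatio A (Real.log t ^ 2 / t) → β - η ≤ maxDivLogRatio A t := by
  filter_upwards [eventually_gt_atTop 1, Real.tendsto_log_atTop.eventually_ge_atTop (max 1 β),
    Real.tendsto_log_atTop.eventually (eventually_add_mul_log_le 1 2 one_pos),
    Real.tendsto_log_atTop.eventually (eventually_add_mul_log_le (Real.log 2) (2 * β) hη)]
    with t ht hxβ hL hlog hG
  set x := Real.log t
  have hx1 : 1 ≤ x := le_of_max_le_left hxβ
  have hlogx : 0 ≤ Real.log x := Real.log_nonneg hx1
  have hlogε : Real.log (1 / (x ^ 2 / t)) = x - 2 * Real.log x := by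
    rw [one_div_div, Real.log_div (by positivity) (by positivity), Real.log_pow]
    push_cast; ring
  refine sub_le_maxDivLogRatio ht (by positivity) (by rw [hlogε]; linarith) hG ?_ ?_
  · rw [hlogε, mul_div_cancel₀ _ (by positivity)]
    nlinarith [le_of_max_le_right hxβ]
  · rw [hlogε]; nlinarith

theorem limsup_maxDivLogRatio_le_upperMinkowski :
    limsup (fun t => ENNReal.ofReal (maxDivLogRatio A t)) atTop ≤ upperMinkowski A := by
  refine (limsup_ofReal_le_limsup_ofReal fun β _ η hη =>
    eventually_sub_le_coveringLogRatio_inv β η hη).trans_eq ?_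
  rw [upperMinkowski, ← inv_atTop₀, ← Filter.map_inv]
  rfl

theorem liminf_maxDivLogRatio_le_lowerMinkowski :
    liminf (fun t => ENNReal.ofReal (maxDivLogRatio A t)) atTop ≤ lowerMinkowski A := by
  refine (liminf_ofReal_le_liminf_ofReal fun β _ η hη =>
    eventually_sub_le_coveringLogRatio_inv β η hη).trans_eq ?_
  rw [lowerMinkowski, ← inv_atTop₀, ← Filter.map_inv]
  rfl

theorem upperMinkowski_le_limsup_maxDivLogRatio :
    upperMinkowski A ≤ limsup (fun t => ENNReal.ofReal (maxDivLogRatio A t)) atTop := by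
  have hT : Tendsto (fun ε : ℝ => 1 / ε * Real.log (1 / ε) ^ 2) (𝓝[>] 0) atTop := by
    have hinv : Tendsto (fun ε : ℝ => 1 / ε) (𝓝[>] 0) atTop := by
      simpa only [one_div] using tendsto_inv_nhdsGT_zero (𝕜 := ℝ)
    exact hinv.atTop_mul_atTop₀ ((tendsto_pow_atTop two_ne_zero).comp
      (Real.tendsto_log_atTop.comp hinv))
  exact (limsup_ofReal_le_limsup_ofReal (f := coveringLogRatio A) fun β _ η hη =>
    eventually_sub_le_maxDivLogRatio_nhdsGT β η hη).trans
    (hT.limsup_comp_le_limsup (u := fun t => ENNReal.ofReal (maxDivLogRatio A t)))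

theorem lowerMinkowski_le_liminf_maxDivLogRatio :
    lowerMinkowski A ≤ liminf (fun t => ENNReal.ofReal (maxDivLogRatio A t)) atTop := by
  have hE : Tendsto (fun t : ℝ => Real.log t ^ 2 / t) atTop (𝓝[>] 0) := by
    refine tendsto_nhdsWithin_iff.2 ⟨?_, ?_⟩
    · simpa using Real.tendsto_pow_log_div_mul_add_atTop 1 0 2 one_ne_zero
    · filter_upwards [eventually_gt_atTop 1] with t ht
      exact mem_Ioi.2 (div_pos (pow_pos (Real.log_pos ht) 2) (zero_lt_one.trans ht))
  exact (hE.liminf_le_liminf_comp (u := fun ε => ENNReal.ofReal (coveringLogRatio A ε))).trans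
    (liminf_ofReal_le_liminf_ofReal fun β _ η hη => eventually_sub_le_maxDivLogRatio_atTop β η hη)

end Dimension

/-- For a nonempty compact metric space `A`,
`limsup_{t→∞} log|tA|₊/log t` is the upper Minkowski dimension of `A` and
`liminf_{t→∞} log|tA|₊/log t` is the lower Minkowski dimension of `A`. -/
theorem stmt12 (A : Type*) [MetricSpace A] [MeasurableSpace A] [BorelSpace A]
    [CompactSpace A] [Nonempty A] :
    limsup (fun t : ℝ =>
        ENNReal.ofReal (Real.log (maxDiv A t).toReal / Real.log t)) atTop
      = upperMinkowski A ∧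
    liminf (fun t : ℝ =>
        ENNReal.ofReal (Real.log (maxDiv A t).toReal / Real.log t)) atTop
      = lowerMinkowski A :=
  ⟨le_antisymm limsup_maxDivLogRatio_le_upperMinkowski upperMinkowski_le_limsup_maxDivLogRatio,
    le_antisymm liminf_maxDivLogRatio_le_lowerMinkowski lowerMinkowski_le_liminf_maxDivLogRatio⟩
end
end

section
/- Let (A,d) be a nonempty compact metric space, and let ε > 0 and t > 0. Then |tA|_+ ≤ e^{tε} · N(A, ε/2). -/
open MeasureTheory Filter
open scoped ENNReal Topology

noncomputable section

/-!
Cover `A` by `N = N(A, ε/2)` balls of radius `ε/2` and refine the cover to a Borel partition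
`D₁, …, D_N` into sets of diameter at most `ε`. For a probability measure `μ`, restricting the
double integral to the diagonal blocks `Dᵢ × Dᵢ`, where the kernel is at least `e^{-tε}`, gives
`∫∫ e^{-t d} dμ dμ ≥ e^{-tε} ∑ μ(Dᵢ)²`, and by Cauchy–Schwarz `∑ μ(Dᵢ)² ≥ (∑ μ(Dᵢ))² / N = 1 / N`.
-/

open Set Function

theorem ENNReal.sq_sum_le_card_mul_sum_sq {ι : Type*} [Fintype ι] (x : ι → ℝ≥0∞) :
    (∑ i, x i) ^ 2 ≤ Fintype.card ι * ∑ i, x i ^ 2 := by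
  by_cases hx : ∀ i, x i ≠ ∞
  · lift x to ι → NNReal using hx
    have h := _root_.sq_sum_le_card_mul_sum_sq (s := Finset.univ) (f := x)
    rw [Finset.card_univ] at h
    beta_reduce
    exact_mod_cast h
  · push Not at hx
    obtain ⟨i, hi⟩ := hx
    have : Nonempty ι := ⟨i⟩
    have hsum : ∑ i, x i ^ 2 = ∞ := ENNReal.sum_eq_top.2 ⟨i, Finset.mem_univ i, by simp [hi]⟩
    rw [hsum, ENNReal.mul_top (by simp)]
    exact le_top

theorem mul_sum_measure_sq_le_lintegral_lintegral {α ι : Type*} [MeasurableSpace α] [Fintype ι]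
    (μ : Measure α) {f : α → α → ℝ≥0∞} {c : ℝ≥0∞} {D : ι → Set α}
    (hDm : ∀ i, MeasurableSet (D i)) (hD : Pairwise (Disjoint on D))
    (hf : ∀ i, ∀ a ∈ D i, ∀ b ∈ D i, c ≤ f a b) :
    c * ∑ i, μ (D i) ^ 2 ≤ ∫⁻ a, ∫⁻ b, f a b ∂μ ∂μ := by
  have block : ∀ i, c * μ (D i) ^ 2 ≤ ∫⁻ a in D i, ∫⁻ b, f a b ∂μ ∂μ := fun i =>
    calc c * μ (D i) ^ 2 = ∫⁻ _ in D i, ∫⁻ _ in D i, c ∂μ ∂μ := by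
          simp only [setLIntegral_const]; ring
      _ ≤ ∫⁻ a in D i, ∫⁻ b in D i, f a b ∂μ ∂μ :=
          setLIntegral_mono' (hDm i) fun a ha => setLIntegral_mono' (hDm i) (hf i a ha)
      _ ≤ ∫⁻ a in D i, ∫⁻ b, f a b ∂μ ∂μ :=
          lintegral_mono fun _ => setLIntegral_le_lintegral _ _
  calc c * ∑ i, μ (D i) ^ 2 = ∑ i, c * μ (D i) ^ 2 := Finset.mul_sum _ _ _
    _ ≤ ∑ i, ∫⁻ a in D i, ∫⁻ b, f a b ∂μ ∂μ := Finset.sum_le_sum fun i _ => block i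
    _ = ∫⁻ a in ⋃ i, D i, ∫⁻ b, f a b ∂μ ∂μ := by rw [lintegral_iUnion hDm hD, tsum_fintype]
    _ ≤ ∫⁻ a, ∫⁻ b, f a b ∂μ ∂μ := setLIntegral_le_lintegral _ _

theorem maxDiv_le_of_partition {A ι : Type*} [MetricSpace A] [MeasurableSpace A] [Fintype ι]
    {D : ι → Set A} (hDm : ∀ i, MeasurableSet (D i)) (hD : Pairwise (Disjoint on D))
    (hcover : ⋃ i, D i = univ) {ε t : ℝ} (ht : 0 ≤ t)
    (hdiam : ∀ i, ∀ a ∈ D i, ∀ b ∈ D i, dist a b ≤ ε) :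
    maxDiv A t ≤ ENNReal.ofReal (Real.exp (t * ε) * Fintype.card ι) := by
  refine iSup_le fun μ => ?_
  set I := ∫⁻ a, ∫⁻ b, ENNReal.ofReal (Real.exp (-t * dist a b))
    ∂(μ : Measure A) ∂(μ : Measure A)
  have hmass : 1 ≤ ∑ i, (μ : Measure A) (D i) := by
    rw [← measure_univ (μ := (μ : Measure A)), ← hcover]
    exact measure_iUnion_fintype_le _ _
  have hblocks : ENNReal.ofReal (Real.exp (-(t * ε))) * ∑ i, (μ : Measure A) (D i) ^ 2 ≤ I :=
    mul_sum_measure_sq_le_lintegral_lintegral _ hDm hD fun i a ha b hb =>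
      ENNReal.ofReal_le_ofReal <| Real.exp_le_exp.2 <| by
        linarith [mul_le_mul_of_nonneg_left (hdiam i a ha b hb) ht]
  have hexp : ENNReal.ofReal (Real.exp (t * ε)) * ENNReal.ofReal (Real.exp (-(t * ε))) = 1 := by
    rw [← ENNReal.ofReal_mul (Real.exp_nonneg _), ← Real.exp_add, add_neg_cancel, Real.exp_zero,
      ENNReal.ofReal_one]
  rw [ENNReal.ofReal_mul (Real.exp_nonneg _), ENNReal.ofReal_natCast]
  have hone : 1 ≤ ENNReal.ofReal (Real.exp (t * ε)) * Fintype.card ι * I :=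
    calc 1 ≤ (∑ i, (μ : Measure A) (D i)) ^ 2 := one_le_pow₀ hmass
      _ ≤ Fintype.card ι * ∑ i, (μ : Measure A) (D i) ^ 2 := ENNReal.sq_sum_le_card_mul_sum_sq _
      _ = ENNReal.ofReal (Real.exp (t * ε)) * Fintype.card ι *
            (ENNReal.ofReal (Real.exp (-(t * ε))) * ∑ i, (μ : Measure A) (D i) ^ 2) := by
          rw [mul_comm (ENNReal.ofReal _), mul_assoc, ← mul_assoc (ENNReal.ofReal _),
            hexp, one_mul]
      _ ≤ _ := by gcongr
  rw [ENNReal.inv_le_iff_le_mul (fun h => absurd h (by finiteness))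
    (fun _ h => by simp [h] at hone), mul_comm]
  exact hone

theorem exists_finset_card_eq_coveringNumber {A : Type*} [MetricSpace A] [CompactSpace A]
    {r : ℝ} (hr : 0 < r) :
    ∃ s : Finset A, s.card = coveringNumber A r ∧ ∀ a, ∃ c ∈ s, dist a c ≤ r := by
  obtain ⟨T, -, hT, hcover⟩ := finite_cover_balls_of_compact (isCompact_univ (X := A)) hr
  refine Nat.sInf_mem (s := {m | ∃ s : Finset A, s.card = m ∧ ∀ a, ∃ c ∈ s, dist a c ≤ r})
    ⟨hT.toFinset.card, hT.toFinset, rfl, fun a => ?_⟩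
  obtain ⟨c, hc, hac⟩ := mem_iUnion₂.1 (hcover (mem_univ a))
  exact ⟨c, hT.mem_toFinset.2 hc, (Metric.mem_ball.1 hac).le⟩

theorem exists_measurable_partition_of_finset_cover {A : Type*} [MetricSpace A]
    [MeasurableSpace A] [OpensMeasurableSpace A] {s : Finset A} {r : ℝ}
    (hs : ∀ a, ∃ c ∈ s, dist a c ≤ r) :
    ∃ D : Fin s.card → Set A, (∀ i, MeasurableSet (D i)) ∧ Pairwise (Disjoint on D) ∧
      ⋃ i, D i = univ ∧ ∀ i, ∀ a ∈ D i, ∀ b ∈ D i, dist a b ≤ 2 * r := by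
  set B : Fin s.card → Set A := fun i => Metric.closedBall (s.equivFin.symm i) r
  refine ⟨disjointed B, fun i => disjointedRec (fun _ _ ht => ht.diff measurableSet_closedBall)
    measurableSet_closedBall, disjoint_disjointed B, ?_, fun i a ha b hb => ?_⟩
  · rw [iUnion_disjointed]
    refine eq_univ_of_forall fun a => mem_iUnion.2 ?_
    obtain ⟨c, hc, hac⟩ := hs a
    exact ⟨s.equivFin ⟨c, hc⟩, by simpa [B] using hac⟩
  · have ha' := disjointed_subset B i ha
    have hb' := disjointed_subset B i hb
    rw [Metric.mem_closedBall] at ha' hb'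
    linarith [dist_triangle_right a b (s.equivFin.symm i : A)]

theorem stmt13_general (A : Type*) [MetricSpace A] [MeasurableSpace A] [BorelSpace A]
    [CompactSpace A] (ε t : ℝ) (hε : 0 < ε) (ht : 0 < t) :
    maxDiv A t ≤ ENNReal.ofReal (Real.exp (t * ε) * coveringNumber A (ε / 2)) := by
  obtain ⟨s, hcard, hcover⟩ := exists_finset_card_eq_coveringNumber (A := A) (half_pos hε)
  obtain ⟨D, hDm, hD, hDcover, hdiam⟩ := exists_measurable_partition_of_finset_cover hcover
  rw [← hcard, ← Fintype.card_fin s.card]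
  exact maxDiv_le_of_partition hDm hD hDcover ht.le fun i a ha b hb => by
    linarith [hdiam i a ha b hb]

/-- For a nonempty compact metric space `A` and `ε, t > 0`,
`|tA|₊ ≤ e^{tε}·N(A,ε/2)`. -/
theorem stmt13 (A : Type*) [MetricSpace A] [MeasurableSpace A] [BorelSpace A]
    [CompactSpace A] [Nonempty A] (ε t : ℝ) (hε : 0 < ε) (ht : 0 < t) :
    maxDiv A t ≤ ENNReal.ofReal (Real.exp (t * ε) * coveringNumber A (ε / 2)) :=
  stmt13_general A ε t hε ht
end
end

section
/- Let (A,d) be a nonempty compact metric space, and let ε > 0 and t > 0. Then 1/|tA|_+ ≤ 1/M(A,ε) + e^{-tε}, i.e. |tA|_+ ≥ (1/M(A,ε) + e^{-tε})^{-1}. -/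
/-!
Take the uniform probability measure on the centres `x₁, …, x_M` of a maximal `ε`-packing,
`M = M(A,ε)`; compactness bounds the size of `ε`-separated families, so such a packing exists.
The similarity `∫∫ e^{-t d(a,b)}` of this measure is the average of `e^{-t d(xⱼ,xₖ)}` over all
pairs: the `M` diagonal pairs contribute `1/M`, and the remaining pairs lie at distance more than
`ε`, so each contributes at most `e^{-tε}`.
-/

open MeasureTheory Filter
open scoped ENNReal Topology

noncomputable section

lemma Metric.lt_dist_of_disjoint_closedBall {X : Type*} [PseudoMetricSpace X] {x y : X}
    {ε : ℝ} (hε : 0 ≤ ε) (h : Disjoint (Metric.closedBall x ε) (Metric.closedBall y ε)) :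
    ε < dist x y := by
  by_contra! hle
  exact Set.disjoint_left.1 h (Metric.mem_closedBall'.2 hle) (Metric.mem_closedBall_self hε)

lemma Metric.packingNumber_ne_top_of_isCompact {X : Type*} [PseudoEMetricSpace X]
    {ε : NNReal} (hε : ε ≠ 0) {s : Set X} (hs : IsCompact s) :
    Metric.packingNumber ε s ≠ ⊤ := by
  obtain ⟨N, -, hN, hcover⟩ :=
    Metric.exists_finite_isCover_of_isCompact (half_pos hε.bot_lt).ne' hs
  have h := Metric.packingNumber_two_mul_le_externalCoveringNumber (ε / 2) s
  rw [mul_div_cancel₀ _ two_ne_zero] at h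
  exact (h.trans hcover.externalCoveringNumber_le_encard |>.trans_lt hN.encard_lt_top).ne

lemma Metric.card_le_packingNumber_of_pairwise_lt_dist {X ι : Type*} [PseudoMetricSpace X]
    {x : ι → X} {ε : ℝ} (hε : 0 ≤ ε) (hx : Pairwise fun j k => ε < dist (x j) (x k)) :
    ENat.card ι ≤ Metric.packingNumber ε.toNNReal (Set.univ : Set X) := by
  have hdist {j k : ι} (hne : x j ≠ x k) : ε < dist (x j) (x k) :=
    hx fun hjk => hne (congrArg x hjk)
  have hinj : x.Injective := fun j k hjk => by
    by_contra hne
    simpa [hjk] using hε.trans_lt (hx hne)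
  have hsep : Metric.IsSeparated (ε.toNNReal : ℝ≥0∞) (Set.range x) := by
    rintro _ ⟨j, rfl⟩ _ ⟨k, rfl⟩ hne
    rw [edist_dist, ENNReal.ofNNReal_toNNReal,
      ENNReal.ofReal_lt_ofReal_iff (hε.trans_lt (hdist hne))]
    exact hdist hne
  exact hinj.encard_range.trans (hsep.encard_le_packingNumber (Set.subset_univ _))

section Packing

variable {X : Type*} [MetricSpace X] {ε : ℝ}

lemma bddAbove_card_pairwise_disjoint_closedBall [CompactSpace X] (hε : 0 < ε) :
    BddAbove {m : ℕ | ∃ x : Fin m → X, Pairwise fun j k =>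
      Disjoint (Metric.closedBall (x j) ε) (Metric.closedBall (x k) ε)} := by
  have hfin := Metric.packingNumber_ne_top_of_isCompact (ε := ε.toNNReal)
    (by simpa using hε) (isCompact_univ (X := X))
  refine ⟨(Metric.packingNumber ε.toNNReal (Set.univ : Set X)).toNat, ?_⟩
  rintro m ⟨x, hx⟩
  have hle := Metric.card_le_packingNumber_of_pairwise_lt_dist hε.le fun j k hjk =>
    Metric.lt_dist_of_disjoint_closedBall hε.le (hx hjk)
  simpa using ENat.toNat_le_toNat hle hfin

lemma exists_pairwise_disjoint_closedBall_packingNumber [CompactSpace X] (hε : 0 < ε) :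
    ∃ x : Fin (packingNumber X ε) → X, Pairwise fun j k =>
      Disjoint (Metric.closedBall (x j) ε) (Metric.closedBall (x k) ε) := by
  unfold packingNumber
  exact Nat.sSup_mem ⟨0, by simp⟩ (bddAbove_card_pairwise_disjoint_closedBall hε)

lemma packingNumber_pos [CompactSpace X] [Nonempty X] (hε : 0 < ε) : 0 < packingNumber X ε :=
  le_csSup (bddAbove_card_pairwise_disjoint_closedBall hε)
    ⟨fun _ => Classical.arbitrary X, Subsingleton.pairwise⟩

end Packing

section EmpiricalMeasure

variable {Ω ι : Type*} [MeasurableSpace Ω] [Fintype ι]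

def empiricalMeasure (x : ι → Ω) : Measure Ω :=
  (Fintype.card ι : ℝ≥0∞)⁻¹ • ∑ j, Measure.dirac (x j)

lemma lintegral_empiricalMeasure [MeasurableSingletonClass Ω] (x : ι → Ω) (f : Ω → ℝ≥0∞) :
    ∫⁻ a, f a ∂empiricalMeasure x = (Fintype.card ι : ℝ≥0∞)⁻¹ * ∑ j, f (x j) := by
  simp [empiricalMeasure, lintegral_dirac]

instance [Nonempty ι] (x : ι → Ω) : IsProbabilityMeasure (empiricalMeasure x) :=
  ⟨by simp [empiricalMeasure, ENNReal.inv_mul_cancel]⟩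

end EmpiricalMeasure

lemma inv_maxDiv_le (A : Type*) [MetricSpace A] [MeasurableSpace A] (t : ℝ) (μ : Measure A)
    [IsProbabilityMeasure μ] :
    (maxDiv A t)⁻¹ ≤ ∫⁻ a, ∫⁻ b, ENNReal.ofReal (Real.exp (-t * dist a b)) ∂μ ∂μ :=
  ENNReal.inv_le_iff_inv_le.2 <| le_iSup_of_le (⟨μ, inferInstance⟩ : ProbabilityMeasure A) le_rfl

section SeparatedFamily

variable {X ι : Type*} [PseudoMetricSpace X] {x : ι → X} {ε t : ℝ}

lemma ofReal_exp_neg_mul_dist_le [DecidableEq ι] (ht : 0 ≤ t)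
    (hx : Pairwise fun j k => ε ≤ dist (x j) (x k)) (j k : ι) :
    ENNReal.ofReal (Real.exp (-t * dist (x j) (x k)))
      ≤ (if j = k then 1 else 0) + ENNReal.ofReal (Real.exp (-t * ε)) := by
  split_ifs with hjk
  · simp [hjk]
  · rw [zero_add, neg_mul, neg_mul]
    gcongr
    exact hx hjk

lemma sum_ofReal_exp_neg_mul_dist_le [Fintype ι] (ht : 0 ≤ t)
    (hx : Pairwise fun j k => ε ≤ dist (x j) (x k)) (j : ι) :
    ∑ k, ENNReal.ofReal (Real.exp (-t * dist (x j) (x k)))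
      ≤ 1 + Fintype.card ι * ENNReal.ofReal (Real.exp (-t * ε)) := by
  classical
  calc ∑ k, ENNReal.ofReal (Real.exp (-t * dist (x j) (x k)))
      ≤ ∑ k, ((if j = k then 1 else 0) + ENNReal.ofReal (Real.exp (-t * ε))) :=
        Finset.sum_le_sum fun k _ => ofReal_exp_neg_mul_dist_le ht hx j k
    _ = 1 + Fintype.card ι * ENNReal.ofReal (Real.exp (-t * ε)) := by
        simp [Finset.sum_add_distrib]

lemma lintegral_lintegral_exp_neg_mul_dist_empiricalMeasure_le [Fintype ι] [Nonempty ι]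
    [MeasurableSpace X] [MeasurableSingletonClass X] (ht : 0 ≤ t)
    (hx : Pairwise fun j k => ε ≤ dist (x j) (x k)) :
    ∫⁻ a, ∫⁻ b, ENNReal.ofReal (Real.exp (-t * dist a b))
        ∂empiricalMeasure x ∂empiricalMeasure x
      ≤ (Fintype.card ι : ℝ≥0∞)⁻¹ + ENNReal.ofReal (Real.exp (-t * ε)) := by
  set n : ℝ≥0∞ := (Fintype.card ι : ℝ≥0∞)
  have hn : n ≠ 0 := by simp [n]
  simp only [lintegral_empiricalMeasure]
  calc n⁻¹ * ∑ j, n⁻¹ * ∑ k, ENNReal.ofReal (Real.exp (-t * dist (x j) (x k)))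
      ≤ n⁻¹ * ∑ _j : ι, n⁻¹ * (1 + n * ENNReal.ofReal (Real.exp (-t * ε))) := by
        gcongr with j
        exact sum_ofReal_exp_neg_mul_dist_le ht hx j
    _ = n⁻¹ + ENNReal.ofReal (Real.exp (-t * ε)) := by
        rw [Finset.sum_const, Finset.card_univ, nsmul_eq_mul, ← mul_assoc,
          ENNReal.inv_mul_cancel hn (ENNReal.natCast_ne_top _), one_mul, mul_add, mul_one,
          ← mul_assoc, ENNReal.inv_mul_cancel hn (ENNReal.natCast_ne_top _), one_mul]

end SeparatedFamily

/-- For a nonempty compact metric space `A` and `ε, t > 0`,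
`1/|tA|₊ ≤ 1/M(A,ε) + e^{-tε}`. -/
theorem stmt14 (A : Type*) [MetricSpace A] [MeasurableSpace A] [BorelSpace A]
    [CompactSpace A] [Nonempty A] (ε t : ℝ) (hε : 0 < ε) (ht : 0 < t) :
    (maxDiv A t)⁻¹
      ≤ ENNReal.ofReal ((packingNumber A ε : ℝ)⁻¹ + Real.exp (-t * ε)) := by
  have hM := packingNumber_pos (X := A) hε
  have : NeZero (packingNumber A ε) := ⟨hM.ne'⟩
  obtain ⟨x, hx⟩ := exists_pairwise_disjoint_closedBall_packingNumber (X := A) hε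
  have hsep : Pairwise fun j k => ε ≤ dist (x j) (x k) := fun j k hjk =>
    (Metric.lt_dist_of_disjoint_closedBall hε.le (hx hjk)).le
  calc (maxDiv A t)⁻¹
      ≤ ∫⁻ a, ∫⁻ b, ENNReal.ofReal (Real.exp (-t * dist a b))
          ∂empiricalMeasure x ∂empiricalMeasure x := inv_maxDiv_le A t _
    _ ≤ (packingNumber A ε : ℝ≥0∞)⁻¹ + ENNReal.ofReal (Real.exp (-t * ε)) := by
        simpa using lintegral_lintegral_exp_neg_mul_dist_empiricalMeasure_le ht.le hsep
    _ = ENNReal.ofReal ((packingNumber A ε : ℝ)⁻¹ + Real.exp (-t * ε)) := by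
        rw [ENNReal.ofReal_add (by positivity) (Real.exp_pos _).le, ENNReal.ofReal_inv_of_pos
          (by exact_mod_cast hM), ENNReal.ofReal_natCast]
end
end

section
/- Let (A,d) be a finite nonempty metric space satisfying the ultrametric inequality d(a,c) ≤ max(d(a,b), d(b,c)) for all a, b, c ∈ A. For a ∈ A let B(a) := { b ∈ A : d(a,b) ≤ 1 } and w(a) := 1/card(B(a)). Then: (i) for every a ∈ A, Σ_{b ∈ B(a)} w(b) = 1 (so w is an ultraweighting for A); and (ii) Σ_{a ∈ A} w(a) = N(A,1) = M(A,1). -/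
/-! In an ultrametric space "being at distance at most `r`" is an equivalence relation whose
classes are exactly the closed `r`-balls. Hence `#B(b)` is constant on each ball and the
weights `1 / #B(b)` sum to `1` over it, and summing over all points counts the balls. So does
any minimal covering by `r`-balls or maximal packing of them: a covering meets every class,
the balls of a packing lie in distinct classes, and one point per class is both. -/

open Finset

noncomputable section

/-- The covering number `N(A,1)`: the smallest `m` such that `A` is the union of `m`
closed balls of radius `1` centered at points of `A`. -/
def coveringNumberOne (A : Type*) [MetricSpace A] : ℕ :=
  sInf {m : ℕ | ∃ s : Finset A, s.card = m ∧ ∀ a : A, ∃ c ∈ s, dist a c ≤ 1}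

/-- The packing number `M(A,1)`: the largest `m` such that there are `m` points of `A`
whose closed balls of radius `1` are pairwise disjoint. -/
def packingNumberOne (A : Type*) [MetricSpace A] : ℕ :=
  sSup {m : ℕ | ∃ x : Fin m → A, Pairwise fun j k =>
    Disjoint (Metric.closedBall (x j) 1) (Metric.closedBall (x k) 1)}

open Metric

namespace IsUltrametricDist

section PseudoMetric

variable {X : Type*} [PseudoMetricSpace X] [IsUltrametricDist X] {r : ℝ}

def closedBallSetoid (hr : 0 ≤ r) : Setoid X where
  r x y := dist x y ≤ r
  iseqv :=
    { refl x := by simpa using hr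
      symm h := by rwa [dist_comm]
      trans h₁ h₂ := (dist_triangle_max _ _ _).trans (max_le h₁ h₂) }

theorem mk_closedBallSetoid_eq_iff (hr : 0 ≤ r) {x y : X} :
    Quotient.mk (closedBallSetoid hr) x = Quotient.mk _ y ↔ dist x y ≤ r :=
  Quotient.eq

theorem disjoint_closedBall_of_lt_dist {x y : X} (h : r < dist x y) :
    Disjoint (closedBall x r) (closedBall y r) :=
  Set.disjoint_left.2 fun _ hx hy =>
    h.not_ge <| (dist_triangle_max _ _ _).trans (max_le (by rwa [dist_comm]) hy)

theorem card_quotient_le_card_of_cover (hr : 0 ≤ r) {t : Finset X}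
    (ht : ∀ a, ∃ c ∈ t, dist a c ≤ r) :
    Nat.card (Quotient (closedBallSetoid (X := X) hr)) ≤ t.card := by
  rw [← Nat.card_eq_finsetCard]
  refine Nat.card_le_card_of_surjective (fun c : t => Quotient.mk _ c.1) fun q => ?_
  induction q using Quotient.ind with
  | _ a =>
    obtain ⟨c, hc, hac⟩ := ht a
    exact ⟨⟨c, hc⟩, (mk_closedBallSetoid_eq_iff hr).2 (by rwa [dist_comm])⟩

variable [Fintype X]

theorem filter_dist_le_eq_of_dist_le {x y : X} (h : dist x y ≤ r) :
    univ.filter (fun c => dist y c ≤ r) = univ.filter (fun c => dist x c ≤ r) := by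
  ext c
  simp only [mem_filter, mem_univ, true_and]
  exact ⟨fun hy => (dist_triangle_max x y c).trans (max_le h hy),
    fun hx => (dist_triangle_max y x c).trans (max_le (by rwa [dist_comm]) hx)⟩

theorem sum_one_div_card_closedBall_eq_one (hr : 0 ≤ r) (a : X) :
    ∑ b ∈ univ.filter (fun b => dist a b ≤ r),
      (1 : ℝ) / (univ.filter (fun c => dist b c ≤ r)).card = 1 := by
  have hpos : 0 < (univ.filter (fun c => dist a c ≤ r)).card :=
    card_pos.2 ⟨a, by simpa using hr⟩
  rw [sum_congr rfl fun b hb => by rw [filter_dist_le_eq_of_dist_le (mem_filter.1 hb).2],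
    sum_const, nsmul_eq_mul, mul_one_div, div_self (by exact_mod_cast hpos.ne')]

theorem sum_one_div_card_closedBall_eq_card_quotient (hr : 0 ≤ r) :
    ∑ a : X, (1 : ℝ) / (univ.filter (fun c => dist a c ≤ r)).card =
      Nat.card (Quotient (closedBallSetoid (X := X) hr)) := by
  classical
  have hfiber (a : X) : univ.filter (fun b => Quotient.mk (closedBallSetoid hr) b = ⟦a⟧) =
      univ.filter (fun b => dist a b ≤ r) := by
    ext b
    simp only [mem_filter, mem_univ, true_and, mk_closedBallSetoid_eq_iff, dist_comm]
  rw [← sum_fiberwise univ (Quotient.mk (closedBallSetoid hr)), Nat.card_eq_fintype_card,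
    Fintype.card, card_eq_sum_ones, Nat.cast_sum]
  refine sum_congr rfl fun q _ => ?_
  induction q using Quotient.ind with
  | _ a => rw [hfiber, sum_one_div_card_closedBall_eq_one hr, Nat.cast_one]

theorem exists_cover_card_eq_card_quotient (hr : 0 ≤ r) :
    ∃ t : Finset X, t.card = Nat.card (Quotient (closedBallSetoid (X := X) hr)) ∧
      ∀ a, ∃ c ∈ t, dist a c ≤ r := by
  classical
  refine ⟨(univ : Finset (Quotient (closedBallSetoid hr))).image Quotient.out, ?_,
    fun a => ⟨(Quotient.mk _ a).out, mem_image_of_mem _ (mem_univ _), ?_⟩⟩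
  · rw [card_image_of_injective _ Quotient.out_injective, card_univ, Nat.card_eq_fintype_card]
  · rw [dist_comm]
    exact Quotient.mk_out (s := closedBallSetoid hr) a

theorem le_card_quotient_of_pairwise_disjoint (hr : 0 ≤ r) {m : ℕ} {x : Fin m → X}
    (hx : Pairwise fun j k => Disjoint (closedBall (x j) r) (closedBall (x k) r)) :
    m ≤ Nat.card (Quotient (closedBallSetoid (X := X) hr)) := by
  rw [← Nat.card_fin m]
  refine Nat.card_le_card_of_injective (fun j => Quotient.mk _ (x j)) fun j k hjk => ?_
  by_contra hne
  exact Set.disjoint_left.1 (hx hne) (mem_closedBall_self hr)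
    ((mk_closedBallSetoid_eq_iff hr).1 hjk)

theorem exists_pairwise_disjoint_card_quotient (hr : 0 ≤ r) :
    ∃ x : Fin (Nat.card (Quotient (closedBallSetoid (X := X) hr))) → X,
      Pairwise fun j k => Disjoint (closedBall (x j) r) (closedBall (x k) r) := by
  let e := (Finite.equivFin (Quotient (closedBallSetoid (X := X) hr))).symm
  refine ⟨fun j => (e j).out, fun j k hjk => disjoint_closedBall_of_lt_dist ?_⟩
  rw [← not_le, ← mk_closedBallSetoid_eq_iff hr, Quotient.out_eq, Quotient.out_eq]
  exact e.injective.ne hjk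

end PseudoMetric

variable {X : Type*} [MetricSpace X] [IsUltrametricDist X] [Fintype X]

theorem coveringNumberOne_eq_card_quotient :
    coveringNumberOne X = Nat.card (Quotient (closedBallSetoid (X := X) zero_le_one)) := by
  obtain ⟨t, ht, hcover⟩ := exists_cover_card_eq_card_quotient (X := X) zero_le_one
  refine le_antisymm (Nat.sInf_le ⟨t, ht, hcover⟩) (le_csInf ⟨_, t, ht, hcover⟩ ?_)
  rintro m ⟨s, rfl, hs⟩
  exact card_quotient_le_card_of_cover zero_le_one hs

theorem packingNumberOne_eq_card_quotient :
    packingNumberOne X = Nat.card (Quotient (closedBallSetoid (X := X) zero_le_one)) := by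
  have hbdd : ∀ m ∈ {m : ℕ | ∃ x : Fin m → X, Pairwise fun j k =>
      Disjoint (closedBall (x j) 1) (closedBall (x k) 1)},
      m ≤ Nat.card (Quotient (closedBallSetoid (X := X) zero_le_one)) :=
    fun _ ⟨_, hx⟩ => le_card_quotient_of_pairwise_disjoint zero_le_one hx
  have hmem := exists_pairwise_disjoint_card_quotient (X := X) zero_le_one
  exact le_antisymm (csSup_le ⟨_, hmem⟩ hbdd) (le_csSup ⟨_, hbdd⟩ hmem)

end IsUltrametricDist

theorem stmt19_general (A : Type*) [MetricSpace A] [Fintype A]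
    (hultra : ∀ a b c : A, dist a c ≤ max (dist a b) (dist b c)) :
    (∀ a : A, ∑ b ∈ Finset.univ.filter (fun b => dist a b ≤ 1),
        (1 : ℝ) / (Finset.univ.filter (fun c => dist b c ≤ 1)).card = 1) ∧
    (∑ a : A, (1 : ℝ) / (Finset.univ.filter (fun c => dist a c ≤ 1)).card
        = coveringNumberOne A) ∧
    coveringNumberOne A = packingNumberOne A := by
  have : IsUltrametricDist A := ⟨hultra⟩
  open IsUltrametricDist in
  exact ⟨sum_one_div_card_closedBall_eq_one zero_le_one,
    by rw [sum_one_div_card_closedBall_eq_card_quotient zero_le_one,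
      coveringNumberOne_eq_card_quotient],
    by rw [coveringNumberOne_eq_card_quotient, packingNumberOne_eq_card_quotient]⟩

/-- Let `A` be a finite nonempty ultrametric space.  With
`B(a) = {b : d(a,b) ≤ 1}` and `w(a) = 1/#B(a)`, the function `w` is an ultraweighting for
`A` (i.e. `∑_{b ∈ B(a)} w(b) = 1` for all `a`), and the ultramagnitude
`∑_a w(a)` equals `N(A,1) = M(A,1)`. -/
theorem stmt19 (A : Type*) [MetricSpace A] [Fintype A] [Nonempty A]
    (hultra : ∀ a b c : A, dist a c ≤ max (dist a b) (dist b c)) :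
    (∀ a : A, ∑ b ∈ Finset.univ.filter (fun b => dist a b ≤ 1),
        (1 : ℝ) / (Finset.univ.filter (fun c => dist b c ≤ 1)).card = 1) ∧
    (∑ a : A, (1 : ℝ) / (Finset.univ.filter (fun c => dist a c ≤ 1)).card
        = coveringNumberOne A) ∧
    coveringNumberOne A = packingNumberOne A :=
  stmt19_general A hultra
end
end
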